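/- arXiv:1905.04636 — 3 statements merged into one kernel-verified Lean document; each statement's English description precedes it below -/
import Mathlib

section
/- For every V > 0 there exists a constant C > 0 such that for all t \ge 1 and all real v with 0 < v \le V, one has |\rho(t - v)/\rho(t) - e^{v \xi(t)}| \le C e^{v \xi(t)} \cdot v/t, i.e. \rho(t-v)/\rho(t) = e^{v\xi(t)}(1 + O(v/t)). -/
open scoped Classical

open Set MeasureTheory intervalIntegral

noncomputable def psi (x : ℝ) : ℝ := (Real.exp x - 1) / x

lemma exp_half_sq (x : ℝ) : Real.exp (x/2)^2 = Real.exp x := by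
  rw [← Real.exp_nat_mul]; congr 1; push_cast; ring

lemma psi_strictMonoOn : StrictMonoOn psi (Set.Ioi 0) := by
  intro a ha b hb hab
  simp only [mem_Ioi] at ha hb
  have hco : (0:ℝ) < 1 - a/b := by rw [sub_pos]; exact (div_lt_one hb).2 hab
  have h3 := strictConvexOn_exp.2 (mem_univ (0:ℝ)) (mem_univ b) hb.ne
    hco (show (0:ℝ) < a/b by positivity) (by ring)
  simp only [smul_eq_mul, mul_zero, zero_add, Real.exp_zero, mul_one] at h3
  rw [div_mul_cancel₀ a hb.ne'] at h3
  have key2 := mul_lt_mul_of_pos_right h3 hb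
  rw [psi, psi, div_lt_div_iff₀ ha hb]
  have e1 : (1 - a/b + a/b*Real.exp b) * b = b - a + a*Real.exp b := by field_simp
  nlinarith [key2, e1]

lemma xi_exists (t : ℝ) (ht : 1 < t) : ∃ x : ℝ, 0 < x ∧ Real.exp x = 1 + t * x := by
  have htpos : (0:ℝ) < t := by linarith
  have h0 : (0:ℝ) < 1 - 1/t := by
    have : 1/t < 1 := by rw [div_lt_one htpos]; linarith
    linarith
  set x0 : ℝ := 1 - 1/t with hx0
  have hpsix0 : psi x0 ≤ t := by
    have h2 : (1:ℝ) - x0 = 1/t := by simp [hx0]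
    have h2' : (0:ℝ) < 1 - x0 := by rw [h2]; positivity
    have h3 := Real.add_one_le_exp (-x0)
    have h1 : Real.exp x0 * (1 - x0) ≤ 1 := by
      calc Real.exp x0 * (1 - x0) ≤ Real.exp x0 * Real.exp (-x0) := by
            apply mul_le_mul_of_nonneg_left _ (Real.exp_pos x0).le
            linarith
        _ = 1 := by rw [← Real.exp_add]; simp
    have h5 : Real.exp x0 ≤ t := by
      rw [h2] at h1
      rw [← mul_le_mul_iff_left₀ (show (0:ℝ) < 1/t by positivity)]
      calc Real.exp x0 * (1/t) ≤ 1 := h1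
        _ = t * (1/t) := by field_simp
    rw [psi, div_le_iff₀ h0]
    have h6 : t * x0 = t - 1 := by rw [hx0]; field_simp
    linarith
  have hX : t < psi (4*t) := by
    have h5 : (1 + (4*t)/2)^2 ≤ Real.exp (4*t) := by
      have h7 := Real.add_one_le_exp ((4*t)/2)
      rw [← exp_half_sq (4*t)]
      nlinarith [h7]
    rw [psi, lt_div_iff₀ (by linarith : (0:ℝ) < 4*t)]
    nlinarith
  have hcont : ContinuousOn psi (Icc x0 (4*t)) := by
    apply ContinuousOn.div (Real.continuous_exp.continuousOn.sub continuousOn_const)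
      continuousOn_id
    intro x hx hx0'
    simp only [id_eq] at hx0'
    have : x0 ≤ x := hx.1
    rw [hx0'] at this; linarith
  have hle : x0 ≤ 4*t := by
    have h8 : (0:ℝ) < 1/t := by positivity
    have : x0 ≤ 1 := by rw [hx0]; linarith
    linarith
  obtain ⟨c, hc, hpc⟩ := intermediate_value_Icc hle hcont ⟨hpsix0, hX.le⟩
  have hc0 : (0:ℝ) < c := lt_of_lt_of_le h0 hc.1
  refine ⟨c, hc0, ?_⟩
  rw [psi, div_eq_iff hc0.ne'] at hpc
  linarith [hpc]

noncomputable def xif (t : ℝ) : ℝ :=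
  if ht : 1 < t then (xi_exists t ht).choose else 0

lemma xif_pos {t : ℝ} (ht : 1 < t) : 0 < xif t := by
  rw [xif, dif_pos ht]; exact (xi_exists t ht).choose_spec.1

lemma xif_spec {t : ℝ} (ht : 1 < t) : Real.exp (xif t) = 1 + t * xif t := by
  rw [xif, dif_pos ht]; exact (xi_exists t ht).choose_spec.2

lemma psi_xif {t : ℝ} (ht : 1 < t) : psi (xif t) = t := by
  have h := xif_spec ht
  have h2 := xif_pos ht
  rw [psi, h]; field_simp; ring

lemma xi_eq_xif {t x : ℝ} (ht : 1 < t) (hx : 0 < x) (hex : Real.exp x = 1 + t * x) :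
    x = xif t := by
  have h1 : psi x = t := by rw [psi, hex]; field_simp; ring
  exact psi_strictMonoOn.injOn (mem_Ioi.2 hx) (mem_Ioi.2 (xif_pos ht))
    (by rw [h1, psi_xif ht])

lemma xif_mono {t1 t2 : ℝ} (ht1 : 1 < t1) (h12 : t1 ≤ t2) : xif t1 ≤ xif t2 := by
  rcases eq_or_lt_of_le h12 with rfl | hlt
  · exact le_rfl
  · by_contra hgt
    push_neg at hgt
    have h := psi_strictMonoOn (mem_Ioi.2 (xif_pos (ht1.trans hlt))) (mem_Ioi.2 (xif_pos ht1)) hgt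
    rw [psi_xif ht1, psi_xif (ht1.trans hlt)] at h
    linarith

lemma exp_three_ub : Real.exp 3 ≤ 30 := by
  have h : Real.exp 3 = (Real.exp 1)^3 := by rw [← Real.exp_nat_mul]; norm_num
  have h2 : (Real.exp 1)^3 ≤ 2.7182818286^3 :=
    pow_le_pow_left₀ (Real.exp_pos 1).le Real.exp_one_lt_d9.le 3
  rw [h]; calc (Real.exp 1)^3 ≤ 2.7182818286^3 := h2
    _ ≤ 30 := by norm_num

lemma exp_three_lb : (16:ℝ) ≤ Real.exp 3 := by
  have h : Real.exp 3 = (Real.exp 1)^3 := by rw [← Real.exp_nat_mul]; norm_num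
  have h2 : (2.7182818283:ℝ)^3 ≤ (Real.exp 1)^3 :=
    pow_le_pow_left₀ (by norm_num) Real.exp_one_gt_d9.le 3
  rw [h]; calc (16:ℝ) ≤ 2.7182818283^3 := by norm_num
    _ ≤ (Real.exp 1)^3 := h2

lemma xif_ge {t : ℝ} (ht : 3 ≤ t) : 3/2 ≤ xif t := by
  by_contra hlt
  push_neg at hlt
  have ht1 : (1:ℝ) < t := by linarith
  have hψ : psi (xif t) < psi (3/2) :=
    psi_strictMonoOn (mem_Ioi.2 (xif_pos ht1)) (by norm_num) hlt
  rw [psi_xif ht1] at hψ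
  have h32 : psi (3/2) ≤ 3 := by
    rw [psi, div_le_iff₀ (by norm_num : (0:ℝ) < 3/2)]
    have h1 : Real.exp ((3:ℝ)/2) ^ 2 = Real.exp 3 := exp_half_sq 3
    nlinarith [Real.exp_pos ((3:ℝ)/2), exp_three_ub]
  linarith

lemma xif_le {T t : ℝ} (ht : 1 < t) (htT : t ≤ T) : xif t ≤ 4 * T + 2 := by
  have hx := xif_pos ht
  have hs := xif_spec ht
  set x := xif t with hxdef
  have h5 : (1 + x/2)^2 ≤ Real.exp x := by
    have h7 := Real.add_one_le_exp (x/2)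
    rw [← exp_half_sq x]
    nlinarith [h7]
  nlinarith [hs, hx, h5, ht, mul_pos hx hx]

lemma psi_growth {x η : ℝ} (hx : 3/2 ≤ x) (hη : 0 ≤ η) :
    psi x * (1 + η/3) ≤ psi (x + η) := by
  have hx0 : (0:ℝ) < x := by linarith
  have hxη : (0:ℝ) < x + η := by linarith
  rw [psi, psi, div_mul_eq_mul_div, div_le_div_iff₀ hx0 hxη]
  set E := Real.exp x with hE
  set F := Real.exp η with hF
  have hexp : Real.exp (x + η) = E * F := Real.exp_add x η
  have hη2 : 1 + η + η^2/4 ≤ F := by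
    have h7 := Real.add_one_le_exp (η/2)
    rw [hF, ← exp_half_sq η]
    nlinarith [h7]
  have hex : 1 + x ≤ E := by
    have := Real.add_one_le_exp x; linarith
  have hEpos : (0:ℝ) < E := Real.exp_pos x
  have key1 : 0 ≤ x*E - (E-1)*(1+x/3) := by nlinarith
  have key2 : 0 ≤ x*E/4 - (E-1)/3 := by nlinarith
  have h1 : x*E*(1 + η + η^2/4) ≤ x*(E*F) := by
    have := mul_le_mul_of_nonneg_left hη2 (mul_pos hx0 hEpos).le
    nlinarith [this]
  rw [hexp]
  nlinarith [h1, mul_nonneg hη key1, mul_nonneg (mul_nonneg hη hη) key2]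

lemma xif_lip {t1 t2 : ℝ} (ht1 : 3 ≤ t1) (h12 : t1 ≤ t2) :
    xif t2 ≤ xif t1 + 4 * (t2 - t1) / t1 := by
  have ht1' : (1:ℝ) < t1 := by linarith
  have ht2' : (1:ℝ) < t2 := by linarith
  set η := 4 * (t2 - t1) / t1 with hη
  have hη0 : 0 ≤ η := div_nonneg (by linarith) (by linarith)
  by_contra hgt
  push_neg at hgt
  have hξ1 := xif_ge ht1
  have key : psi (xif t1 + η) < psi (xif t2) := by
    apply psi_strictMonoOn _ (mem_Ioi.2 (xif_pos ht2')) hgt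
    have := xif_pos ht1'
    simp only [mem_Ioi]; linarith
  rw [psi_xif ht2'] at key
  have grow := psi_growth hξ1 hη0
  rw [psi_xif ht1'] at grow
  have h3 : t1 * (1 + η/3) = t1 + 4*(t2-t1)/3 := by
    rw [hη]; field_simp
  have : t2 ≤ t1 * (1 + η/3) := by rw [h3]; linarith
  linarith

noncomputable def hfd (ρ : ℝ → ℝ) (t : ℝ) : ℝ := ρ (t - 1) / (t * ρ t)

section rho

variable {ρ : ℝ → ℝ}
  (h0 : ∀ t : ℝ, t < 0 → ρ t = 0)
  (h1 : ∀ t : ℝ, 0 ≤ t → t ≤ 1 → ρ t = 1)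
  (hc : ContinuousOn ρ (Set.Ici 0))
  (hd : ∀ t : ℝ, 1 < t → HasDerivAt ρ (-ρ (t - 1) / t) t)

include hc in
lemma intble {a b : ℝ} (ha : 0 ≤ a) (hab : a ≤ b) : IntervalIntegrable ρ volume a b := by
  apply ContinuousOn.intervalIntegrable
  apply hc.mono
  rw [uIcc_of_le hab]
  exact fun x hx => le_trans ha hx.1

include hc in
lemma primG_hasDeriv {x : ℝ} (hx : 0 < x) :
    HasDerivAt (fun y => ∫ u in (0:ℝ)..y, ρ u) (ρ x) x := by
  apply intervalIntegral.integral_hasDerivAt_right (intble hc le_rfl hx.le)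
  · exact ⟨Ici 0, Filter.mem_of_superset (Ioi_mem_nhds hx) Ioi_subset_Ici_self,
      hc.aestronglyMeasurable measurableSet_Ici⟩
  · exact hc.continuousAt (Filter.mem_of_superset (Ioi_mem_nhds hx) Ioi_subset_Ici_self)

include hc in
lemma primG_cont {X : ℝ} (hX : 0 ≤ X) :
    ContinuousOn (fun y => ∫ u in (0:ℝ)..y, ρ u) (Icc 0 X) := by
  have := intervalIntegral.continuousOn_primitive_interval'
    (μ := volume) (f := ρ) (b₁ := 0) (b₂ := X) (intble hc le_rfl hX)
    (by rw [uIcc_of_le hX]; exact ⟨le_rfl, hX⟩)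
  rwa [uIcc_of_le hX] at this

include h1 hc hd in
lemma ident (t : ℝ) (ht : 1 ≤ t) : t * ρ t = ∫ u in (t-1)..t, ρ u := by
  set G := fun y => ∫ u in (0:ℝ)..y, ρ u with hG
  have ht0 : (0:ℝ) ≤ t := by linarith
  set f := fun x => x * ρ x - G x + G (x - 1) with hfdef
  have key : ∫ u in (1:ℝ)..t, (0:ℝ) = f t - f 1 := by
    apply intervalIntegral.integral_eq_sub_of_hasDeriv_right_of_le ht
    · apply ContinuousOn.add
      · apply ContinuousOn.sub
        · exact continuousOn_id.mul (hc.mono (fun x hx => le_trans zero_le_one hx.1))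
        · exact (primG_cont hc ht0).mono (Icc_subset_Icc (by norm_num) le_rfl)
      · apply (primG_cont hc (show (0:ℝ) ≤ t - 1 by linarith)).comp
          (continuous_id.sub continuous_const).continuousOn
        intro x hx
        exact ⟨by simp; linarith [hx.1], by simp; linarith [hx.2]⟩
    · intro x hx
      have hx1 : 1 < x := hx.1
      have d1 : HasDerivAt (fun y => y * ρ y) (1 * ρ x + x * (-ρ (x-1)/x)) x :=
        (hasDerivAt_id x).mul (hd x hx1)
      have d2 : HasDerivAt G (ρ x) x := primG_hasDeriv hc (by linarith)
      have d3 : HasDerivAt (fun y => G (y - 1)) (ρ (x-1)) x := by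
        have := (primG_hasDeriv hc (show 0 < x - 1 by linarith)).comp x
          ((hasDerivAt_id x).sub_const 1)
        rw [mul_one] at this
        exact this
      have := (d1.sub d2).add d3
      have hx0 : x ≠ 0 := by positivity
      have hval : 1 * ρ x + x * (-ρ (x-1)/x) - ρ x + ρ (x-1) = 0 := by
        field_simp
        ring
      change HasDerivAt f _ x at this
      have h2 : HasDerivAt f 0 x := by
        convert this using 1; linarith [hval]
      exact h2.hasDerivWithinAt
    · exact intervalIntegrable_const
  rw [intervalIntegral.integral_zero] at key
  have hG1 : G 1 = 1 := by
    have : ∫ u in (0:ℝ)..1, ρ u = ∫ u in (0:ℝ)..1, (1:ℝ) := by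
      apply intervalIntegral.integral_congr
      intro u hu
      rw [uIcc_of_le (by norm_num : (0:ℝ) ≤ 1)] at hu
      exact h1 u hu.1 hu.2
    rw [hG]; simp only []; rw [this]; simp
  have hG0 : G 0 = 0 := by rw [hG]; simp
  have hf1 : f 1 = 0 := by
    rw [hfdef]; simp only []
    rw [h1 1 zero_le_one le_rfl, hG1]
    norm_num [hG0]
  have hft : f t = 0 := by linarith [key]
  have hsplit : (∫ u in (0:ℝ)..(t-1), ρ u) + ∫ u in (t-1)..t, ρ u = ∫ u in (0:ℝ)..t, ρ u :=
    intervalIntegral.integral_add_adjacent_intervals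
      (intble hc le_rfl (show (0:ℝ) ≤ t - 1 by linarith))
      (intble hc (show (0:ℝ) ≤ t - 1 by linarith) (by linarith))
  have hft' : t * ρ t - (∫ u in (0:ℝ)..t, ρ u) + (∫ u in (0:ℝ)..(t-1), ρ u) = 0 := hft
  linarith [hft', hsplit]

include h0 h1 hc hd in
lemma rho_pos (t : ℝ) (ht : 0 ≤ t) : 0 < ρ t := by
  by_contra hneg
  push_neg at hneg
  -- find a zero z in [0, t]
  have ht1 : 1 < t := by
    by_contra h
    push_neg at h
    rw [h1 t ht h] at hneg; linarith
  have hz : ∃ z ∈ Icc (1:ℝ) t, ρ z = 0 := by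
    have hcont : ContinuousOn ρ (Icc 1 t) :=
      hc.mono (fun x hx => le_trans zero_le_one hx.1)
    have h1t : ρ 1 = 1 := h1 1 zero_le_one le_rfl
    have : (0:ℝ) ∈ Icc (ρ t) (ρ 1) := ⟨hneg, by rw [h1t]; norm_num⟩
    obtain ⟨z, hz, hz2⟩ := intermediate_value_Icc' ht1.le hcont this
    exact ⟨z, hz, hz2⟩
  obtain ⟨z, hzmem, hzzero⟩ := hz
  set S := {x | x ∈ Icc (0:ℝ) z ∧ ρ x = 0} with hS
  have hSz : z ∈ S := ⟨⟨le_trans zero_le_one hzmem.1, le_rfl⟩, hzzero⟩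
  have hSclosed : IsClosed S := by
    have : S = Icc (0:ℝ) z ∩ ρ ⁻¹' {0} := by
      ext x; simp [hS]
    rw [this]
    apply ContinuousOn.preimage_isClosed_of_isClosed
      (hc.mono (fun x hx => hx.1)) isClosed_Icc isClosed_singleton
  have hSbdd : BddBelow S := ⟨0, fun x hx => hx.1.1⟩
  set t0 := sInf S with ht0
  have ht0S : t0 ∈ S := hSclosed.csInf_mem ⟨z, hSz⟩ hSbdd
  have ht0pos : 0 ≤ t0 := ht0S.1.1
  have ht0z : t0 ≤ z := ht0S.1.2
  have ht0one : 1 < t0 := by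
    by_contra h
    push_neg at h
    have h2 : ρ t0 = 0 := ht0S.2
    rw [h1 t0 ht0pos h] at h2
    exact one_ne_zero h2
  have hpos_below : ∀ x, 0 ≤ x → x < t0 → 0 < ρ x := by
    intro x hx0 hxt0
    by_contra hx
    push_neg at hx
    rcases eq_or_lt_of_le hx with heq | hlt
    · have : x ∈ S := ⟨⟨hx0, by linarith⟩, heq⟩
      linarith [csInf_le hSbdd this]
    · have hcont : ContinuousOn ρ (Icc 0 x) := hc.mono (fun y hy => hy.1)
      have h0x : ρ 0 = 1 := h1 0 le_rfl zero_le_one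
      have : (0:ℝ) ∈ Icc (ρ x) (ρ 0) := ⟨hx, by rw [h0x]; norm_num⟩
      obtain ⟨z', hz', hz'2⟩ := intermediate_value_Icc' hx0 hcont this
      have : z' ∈ S := ⟨⟨hz'.1, by linarith [hz'.2]⟩, hz'2⟩
      linarith [csInf_le hSbdd this, hz'.2]
  have hident := ident h1 hc hd t0 ht0one.le
  have hzero : ρ t0 = 0 := ht0S.2
  rw [hzero, mul_zero] at hident
  have hipos : 0 < ∫ u in (t0-1)..t0, ρ u := by
    apply intervalIntegral_pos_of_pos_on
      (intble hc (by linarith) (by linarith))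
    · intro x hx
      exact hpos_below x (by linarith [hx.1]) hx.2
    · linarith
  linarith

include h0 h1 hc hd in
lemma rho_anti : AntitoneOn ρ (Set.Ici 0) := by
  have hanti1 : AntitoneOn ρ (Set.Ici 1) := by
    apply antitoneOn_of_deriv_nonpos (convex_Ici 1)
      (hc.mono (fun x hx => mem_Ici.2 (le_trans zero_le_one hx)))
    · intro x hx
      rw [interior_Ici] at hx
      exact ((hd x hx).differentiableAt).differentiableWithinAt
    · intro x hx
      rw [interior_Ici] at hx
      rw [(hd x hx).deriv]
      apply div_nonpos_of_nonpos_of_nonneg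
      · simp only [neg_nonpos]
        exact (rho_pos h0 h1 hc hd (x-1) (by linarith [mem_Ioi.1 hx])).le
      · linarith [mem_Ioi.1 hx]
  intro a ha b hb hab
  simp only [mem_Ici] at ha hb
  rcases le_or_gt b 1 with hb1 | hb1
  · rw [h1 a ha (le_trans hab hb1), h1 b hb hb1]
  · rcases le_or_gt 1 a with ha1 | ha1
    · exact hanti1 ha1 hb1.le hab
    · rw [h1 a ha ha1.le]
      have := hanti1 (self_mem_Ici) (mem_Ici.2 hb1.le) hb1.le
      rwa [h1 1 zero_le_one le_rfl] at this

include h0 h1 hc hd in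
lemma rho_le_one (t : ℝ) (ht : 0 ≤ t) : ρ t ≤ 1 := by
  have := rho_anti h0 h1 hc hd (self_mem_Ici (a := (0:ℝ))) (mem_Ici.2 ht) ht
  rwa [h1 0 le_rfl zero_le_one] at this

include h0 h1 hc hd in
lemma hfd_pos (t : ℝ) (ht : 1 ≤ t) : 0 < hfd ρ t := by
  have ha := rho_pos h0 h1 hc hd (t-1) (by linarith)
  have hb := rho_pos h0 h1 hc hd t (by linarith)
  exact div_pos ha (mul_pos (by linarith) hb)

include h0 h1 hc hd in
lemma hfd_cont : ContinuousOn (hfd ρ) (Set.Ici 1) := by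
  apply ContinuousOn.div
  · apply hc.comp (continuous_id.sub continuous_const).continuousOn
    intro x hx
    simp only [mem_Ici] at hx ⊢
    simp; linarith
  · exact continuousOn_id.mul (hc.mono (fun x hx => mem_Ici.2 (le_trans zero_le_one hx)))
  · intro x hx
    have := rho_pos h0 h1 hc hd x (le_trans zero_le_one hx)
    have hx1 : (1:ℝ) ≤ x := hx
    positivity

include h0 h1 hc hd in
lemma hfd_one : hfd ρ 1 = 1 := by
  rw [hfd]
  norm_num [h1 0 le_rfl zero_le_one, h1 1 zero_le_one le_rfl]

include h0 h1 hc hd in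
lemma logFTC (a b : ℝ) (ha : 1 ≤ a) (hab : a ≤ b) :
    Real.log (ρ b) = Real.log (ρ a) - ∫ u in a..b, hfd ρ u := by
  have key : ∫ u in a..b, (-hfd ρ u) = Real.log (ρ b) - Real.log (ρ a) := by
    apply intervalIntegral.integral_eq_sub_of_hasDeriv_right_of_le hab
    · apply ContinuousOn.log (hc.mono (fun x hx => le_trans (by linarith) hx.1))
      intro x hx
      exact (rho_pos h0 h1 hc hd x (le_trans (by linarith) hx.1)).ne'
    · intro x hx
      have hx1 : 1 < x := lt_of_le_of_lt ha hx.1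
      have hpos := rho_pos h0 h1 hc hd x (by linarith)
      have := (hd x hx1).log hpos.ne'
      have hval : -ρ (x-1)/x / ρ x = -hfd ρ x := by
        rw [hfd]; field_simp
      rw [hval] at this
      exact this.hasDerivWithinAt
    · exact (((hfd_cont h0 h1 hc hd).mono
        (fun x hx => le_trans ha (by rw [uIcc_of_le hab] at hx; exact hx.1))).intervalIntegrable).neg
  rw [intervalIntegral.integral_neg] at key
  linarith

include h0 h1 hc hd in
lemma rho_ratio (a b : ℝ) (ha : 1 ≤ a) (hab : a ≤ b) :
    ρ a = ρ b * Real.exp (∫ u in a..b, hfd ρ u) := by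
  have h := logFTC h0 h1 hc hd a b ha hab
  have hpa := rho_pos h0 h1 hc hd a (by linarith)
  have hpb := rho_pos h0 h1 hc hd b (by linarith)
  have : Real.exp (Real.log (ρ a)) = Real.exp (Real.log (ρ b) + ∫ u in a..b, hfd ρ u) := by
    rw [h]; ring_nf
  rw [Real.exp_log hpa, Real.exp_add, Real.exp_log hpb] at this
  exact this

include h0 h1 hc hd in
lemma rho_lip (a b : ℝ) (ha : 0 ≤ a) (hab : a ≤ b) : ρ a - ρ b ≤ b - a := by
  have main : ∀ a', 1 ≤ a' → a' ≤ b → ρ a' - ρ b ≤ b - a' := by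
    intro a' ha' hab'
    have key : ∫ u in a'..b, (-ρ (u-1)/u) = ρ b - ρ a' := by
      apply intervalIntegral.integral_eq_sub_of_hasDeriv_right_of_le hab'
        (hc.mono (fun x hx => le_trans (by linarith) hx.1))
      · intro x hx
        exact (hd x (lt_of_le_of_lt ha' hx.1)).hasDerivWithinAt
      · apply ContinuousOn.intervalIntegrable
        apply ContinuousOn.div
        · apply ContinuousOn.neg
          apply hc.comp (continuous_id.sub continuous_const).continuousOn
          intro x hx
          rw [uIcc_of_le hab'] at hx
          simp only [mem_Ici, id_eq, Pi.sub_apply]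
          linarith [hx.1]
        · exact continuousOn_id
        · intro x hx
          rw [uIcc_of_le hab'] at hx
          have : (1:ℝ) ≤ x := le_trans ha' hx.1
          exact ne_of_gt (by linarith)
    have hlb : -(b - a') ≤ ∫ u in a'..b, (-ρ (u-1)/u) := by
      have h2 : ∫ u in a'..b, (-1 : ℝ) = -(b - a') := by simp
      rw [← h2]
      apply intervalIntegral.integral_mono_on hab' (intervalIntegrable_const)
      · apply ContinuousOn.intervalIntegrable
        apply ContinuousOn.div
        · apply ContinuousOn.neg
          apply hc.comp (continuous_id.sub continuous_const).continuousOn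
          intro x hx
          rw [uIcc_of_le hab'] at hx
          simp only [mem_Ici, id_eq, Pi.sub_apply]
          linarith [hx.1]
        · exact continuousOn_id
        · intro x hx
          rw [uIcc_of_le hab'] at hx
          have : (1:ℝ) ≤ x := le_trans ha' hx.1
          exact ne_of_gt (by linarith)
      · intro u hu
        have hu1 : (1:ℝ) ≤ u := le_trans ha' hu.1
        have hle1 := rho_le_one h0 h1 hc hd (u-1) (by linarith)
        have hge0 := (rho_pos h0 h1 hc hd (u-1) (by linarith)).le
        rw [neg_div, neg_le_neg_iff, div_le_one (show (0:ℝ) < u by linarith)]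
        linarith
    linarith [key, hlb]
  rcases le_or_gt b 1 with hb1 | hb1
  · rw [h1 a ha (le_trans hab hb1), h1 b (le_trans ha hab) hb1]; linarith
  · rcases le_or_gt 1 a with ha1 | ha1
    · exact main a ha1 hab
    · rw [h1 a ha ha1.le]
      have := main 1 le_rfl hb1.le
      rw [h1 1 zero_le_one le_rfl] at this
      linarith

end rho

section rho2

variable {ρ : ℝ → ℝ}
  (h0 : ∀ t : ℝ, t < 0 → ρ t = 0)
  (h1 : ∀ t : ℝ, 0 ≤ t → t ≤ 1 → ρ t = 1)
  (hc : ContinuousOn ρ (Set.Ici 0))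
  (hd : ∀ t : ℝ, 1 < t → HasDerivAt ρ (-ρ (t - 1) / t) t)

include h0 h1 hc hd in
lemma Nanti : AntitoneOn (fun t => t * ρ t) (Set.Ici 1) := by
  apply antitoneOn_of_deriv_nonpos (convex_Ici 1)
  · exact continuousOn_id.mul (hc.mono (fun x hx => mem_Ici.2 (le_trans zero_le_one hx)))
  · intro x hx
    rw [interior_Ici] at hx
    exact ((hasDerivAt_id x).mul (hd x hx)).differentiableAt.differentiableWithinAt
  · intro x hx
    rw [interior_Ici] at hx
    have hx1 : (1:ℝ) < x := hx
    have hD : HasDerivAt (fun t => t * ρ t) (ρ x - ρ (x-1)) x := by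
      have := (hasDerivAt_id x).mul (hd x hx1)
      refine this.congr_deriv ?_
      show 1 * ρ x + x * (-ρ (x-1)/x) = ρ x - ρ (x-1)
      rw [mul_div_assoc', mul_div_cancel_left₀ _ (ne_of_gt (by linarith : (0:ℝ) < x))]
      ring
    rw [hD.deriv]
    have := rho_anti h0 h1 hc hd (show x - 1 ∈ Ici (0:ℝ) by simp; linarith)
      (show x ∈ Ici (0:ℝ) by simp; linarith) (by linarith)
    linarith

include h0 h1 hc hd in
lemma base_mono : MonotoneOn (hfd ρ) (Set.Icc 1 2) := by
  have e : ∀ x ∈ Set.Icc (1:ℝ) 2, hfd ρ x = 1/(x * ρ x) := by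
    intro x hx
    rw [hfd, h1 (x-1) (by linarith [hx.1]) (by linarith [hx.2])]
  intro a ha b hb hab
  rw [e a ha, e b hb]
  have hb0 : 0 < b * ρ b := mul_pos (by linarith [hb.1]) (rho_pos h0 h1 hc hd b (by linarith [hb.1]))
  exact one_div_le_one_div_of_le hb0
    (Nanti h0 h1 hc hd (mem_Ici.2 ha.1) (mem_Ici.2 hb.1) hab)

lemma psi_int {c : ℝ} (hc0 : c ≠ 0) : ∫ s in (0:ℝ)..1, Real.exp (s * c) = psi c := by
  rw [intervalIntegral.integral_comp_mul_right Real.exp hc0]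
  simp [integral_exp, psi, smul_eq_mul]
  ring

include h0 h1 hc hd in
lemma sandwich_aux (hm : MonotoneOn (hfd ρ) (Set.Ici 1)) (t : ℝ) (ht : 2 < t) :
    psi (hfd ρ (t-1)) ≤ t ∧ t ≤ psi (hfd ρ t) := by
  have hid := ident h1 hc hd t (by linarith)
  have hρt := rho_pos h0 h1 hc hd t (by linarith)
  have hcont_aff : ∀ c : ℝ, ContinuousOn (fun u => ρ t * Real.exp ((t - u) * c)) (uIcc (t-1) t) := by
    intro c
    apply ContinuousOn.mul continuousOn_const
    exact (Real.continuous_exp.comp (((continuous_const.sub continuous_id).mul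
      continuous_const))).continuousOn
  have hcompute : ∀ c : ℝ, c ≠ 0 → ∫ u in (t-1)..t, ρ t * Real.exp ((t - u) * c) = ρ t * psi c := by
    intro c hcne
    rw [intervalIntegral.integral_const_mul]
    congr 1
    have hcs := intervalIntegral.integral_comp_sub_left (a := t-1) (b := t)
      (fun w => Real.exp (w * c)) t
    norm_num at hcs
    rw [hcs]
    exact psi_int hcne
  constructor
  · -- lower bound : psi (hfd (t-1)) ≤ t
    set c := hfd ρ (t-1) with hcdef
    have hcpos : 0 < c := hfd_pos h0 h1 hc hd (t-1) (by linarith)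
    have hpt : ∀ u ∈ Set.Icc (t-1) t, ρ t * Real.exp ((t - u) * c) ≤ ρ u := by
      intro u hu
      have hu1 : (1:ℝ) ≤ u := by linarith [hu.1, ht]
      have hratio := rho_ratio h0 h1 hc hd u t hu1 hu.2
      have hint : (t - u) * c ≤ ∫ w in u..t, hfd ρ w := by
        have : ∫ w in u..t, c ≤ ∫ w in u..t, hfd ρ w := by
          apply intervalIntegral.integral_mono_on hu.2 intervalIntegrable_const
          · exact ((hfd_cont h0 h1 hc hd).mono (fun x hx => by
              rw [uIcc_of_le hu.2] at hx; exact le_trans hu1 hx.1)).intervalIntegrable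
          · intro w hw
            exact hm (mem_Ici.2 (by linarith [hu.1])) (mem_Ici.2 (le_trans hu1 hw.1)) (by linarith [hu.1, hw.1])
        simpa [mul_comm] using this
      calc ρ t * Real.exp ((t - u) * c) ≤ ρ t * Real.exp (∫ w in u..t, hfd ρ w) := by
            apply mul_le_mul_of_nonneg_left (Real.exp_le_exp.2 hint) hρt.le
        _ = ρ u := hratio.symm
    have hint2 : ∫ u in (t-1)..t, ρ t * Real.exp ((t - u) * c) ≤ ∫ u in (t-1)..t, ρ u := by
      apply intervalIntegral.integral_mono_on (by linarith)
        ((hcont_aff c).intervalIntegrable) (intble hc (by linarith) (by linarith)) hpt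
    rw [hcompute c hcpos.ne'] at hint2
    rw [← hid] at hint2
    have := (mul_le_mul_iff_right₀ hρt).1 (by rw [mul_comm (ρ t) (psi c)] at hint2; linarith [hint2] : ρ t * psi c ≤ ρ t * t)
    linarith
  · -- upper bound : t ≤ psi (hfd t)
    set c := hfd ρ t with hcdef
    have hcpos : 0 < c := hfd_pos h0 h1 hc hd t (by linarith)
    have hpt : ∀ u ∈ Set.Icc (t-1) t, ρ u ≤ ρ t * Real.exp ((t - u) * c) := by
      intro u hu
      have hu1 : (1:ℝ) ≤ u := by linarith [hu.1, ht]
      have hratio := rho_ratio h0 h1 hc hd u t hu1 hu.2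
      have hint : (∫ w in u..t, hfd ρ w) ≤ (t - u) * c := by
        have : ∫ w in u..t, hfd ρ w ≤ ∫ w in u..t, c := by
          apply intervalIntegral.integral_mono_on hu.2
          · exact ((hfd_cont h0 h1 hc hd).mono (fun x hx => by
              rw [uIcc_of_le hu.2] at hx; exact le_trans hu1 hx.1)).intervalIntegrable
          · exact intervalIntegrable_const
          · intro w hw
            exact hm (mem_Ici.2 (le_trans hu1 hw.1)) (mem_Ici.2 (by linarith)) hw.2
        simpa [mul_comm] using this
      calc ρ u = ρ t * Real.exp (∫ w in u..t, hfd ρ w) := hratio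
        _ ≤ ρ t * Real.exp ((t - u) * c) := by
            apply mul_le_mul_of_nonneg_left (Real.exp_le_exp.2 hint) hρt.le
    have hint2 : ∫ u in (t-1)..t, ρ u ≤ ∫ u in (t-1)..t, ρ t * Real.exp ((t - u) * c) := by
      apply intervalIntegral.integral_mono_on (by linarith)
        (intble hc (by linarith) (by linarith)) ((hcont_aff c).intervalIntegrable) hpt
    rw [hcompute c hcpos.ne'] at hint2
    rw [← hid] at hint2
    have := (mul_le_mul_iff_right₀ hρt).1 (by rw [mul_comm] at hint2; linarith [hint2] : ρ t * t ≤ ρ t * psi c)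
    linarith

include h0 h1 hc hd in
lemma rho_low (T : ℝ) (hT : 1 ≤ T) : ∀ n : ℕ, ∀ t, 0 ≤ t → t ≤ T → t ≤ 1 + n / 2 →
    ((2*T)⁻¹) ^ n ≤ ρ t := by
  intro n
  induction n with
  | zero =>
    intro t ht0 htT htn
    norm_num at htn
    rw [h1 t ht0 htn]
    norm_num
  | succ n ih =>
    intro t ht0 htT htn
    rcases le_or_gt t 1 with ht1 | ht1
    · rw [h1 t ht0 ht1]
      apply pow_le_one₀ (by positivity)
      rw [inv_le_one_iff₀]
      right; linarith
    · have hhalf : (2*T)⁻¹ * ρ (t - 1/2) ≤ ρ t := by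
        have hid := ident h1 hc hd t ht1.le
        have hsplit : (∫ u in (t-1)..(t-1/2), ρ u) + ∫ u in (t-1/2)..t, ρ u
            = ∫ u in (t-1)..t, ρ u :=
          intervalIntegral.integral_add_adjacent_intervals
            (intble hc (by linarith) (by linarith))
            (intble hc (by linarith) (by linarith))
        have h2 : (1/2) * ρ (t-1/2) ≤ ∫ u in (t-1)..(t-1/2), ρ u := by
          have : ∫ u in (t-1)..(t-1/2), ρ (t-1/2) ≤ ∫ u in (t-1)..(t-1/2), ρ u := by
            apply intervalIntegral.integral_mono_on (by linarith) intervalIntegrable_const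
              (intble hc (by linarith) (by linarith))
            intro u hu
            exact rho_anti h0 h1 hc hd (mem_Ici.2 (by linarith [hu.1]))
              (mem_Ici.2 (by linarith)) hu.2
          rw [intervalIntegral.integral_const] at this
          have he : t - 1/2 - (t-1) = 1/2 := by ring
          rw [he] at this
          simpa [smul_eq_mul] using this
        have h3 : 0 ≤ ∫ u in (t-1/2)..t, ρ u := by
          apply intervalIntegral.integral_nonneg (by linarith)
          intro u hu
          exact (rho_pos h0 h1 hc hd u (by linarith [hu.1])).le
        have h4 : (1/2) * ρ (t-1/2) ≤ t * ρ t := by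
          rw [hid]; linarith
        have hρhalf : 0 ≤ ρ (t - 1/2) := (rho_pos h0 h1 hc hd _ (by linarith)).le
        have h2T : (0:ℝ) < 2*T := by linarith
        rw [inv_mul_le_iff₀ h2T]
        calc ρ (t-1/2) = 2 * ((1/2) * ρ (t-1/2)) := by ring
          _ ≤ 2 * (t * ρ t) := by linarith
          _ ≤ 2*T * ρ t := by
              have := rho_pos h0 h1 hc hd t (by linarith)
              nlinarith
      have hih := ih (t - 1/2) (by linarith) (by linarith) (by push_cast; push_cast at htn; linarith)
      calc ((2*T)⁻¹) ^ (n+1) = (2*T)⁻¹ * ((2*T)⁻¹)^n := by ring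
        _ ≤ (2*T)⁻¹ * ρ (t-1/2) := by
            apply mul_le_mul_of_nonneg_left hih
            positivity
        _ ≤ ρ t := hhalf

end rho2
section mono
open Filter Topology

lemma expm1_le {x : ℝ} (hx0 : 0 ≤ x) (hx14 : x ≤ 1/4) : Real.exp x - 1 ≤ 2*x := by
  have h2 := Real.add_one_le_exp (-x)
  have h1 : Real.exp x * (1 - x) ≤ 1 := by
    calc Real.exp x * (1 - x) ≤ Real.exp x * Real.exp (-x) := by
          apply mul_le_mul_of_nonneg_left _ (Real.exp_pos x).le
          linarith
      _ = 1 := by rw [← Real.exp_add]; simp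
  nlinarith [Real.exp_pos x, h1]

variable {ρ : ℝ → ℝ}
  (h0 : ∀ t : ℝ, t < 0 → ρ t = 0)
  (h1 : ∀ t : ℝ, 0 ≤ t → t ≤ 1 → ρ t = 1)
  (hc : ContinuousOn ρ (Set.Ici 0))
  (hd : ∀ t : ℝ, 1 < t → HasDerivAt ρ (-ρ (t - 1) / t) t)

include h0 h1 hc hd in
lemma aff_cont {c : ℝ} (hc1 : 1 ≤ c) : ContinuousOn (fun w => hfd ρ (c + w)) (Set.Ici 0) := by
  apply (hfd_cont h0 h1 hc hd).comp (continuous_const.add continuous_id).continuousOn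
  intro w hw
  simp only [mem_Ici] at hw ⊢
  simp; linarith

include h0 h1 hc hd in
lemma aff_intble {c s1 s2 : ℝ} (hc1 : 1 ≤ c) (h1' : 0 ≤ s1) (h12 : s1 ≤ s2) :
    IntervalIntegrable (fun w => hfd ρ (c + w)) volume s1 s2 := by
  apply ContinuousOn.intervalIntegrable
  apply (aff_cont h0 h1 hc hd hc1).mono
  rw [uIcc_of_le h12]
  exact fun x hx => le_trans h1' hx.1

include h0 h1 hc hd in
lemma inv_hfd (t : ℝ) (ht : 2 ≤ t) :
    1 / hfd ρ t = ∫ s in (0:ℝ)..1, Real.exp (-(∫ w in (0:ℝ)..s, hfd ρ (t - 1 + w))) := by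
  have hρt1 := rho_pos h0 h1 hc hd (t-1) (by linarith)
  have hρt := rho_pos h0 h1 hc hd t (by linarith)
  have hid := ident h1 hc hd t (by linarith)
  have hshift : ∫ u in (t-1)..t, ρ u = ∫ s in (0:ℝ)..1, ρ (t - 1 + s) := by
    have := intervalIntegral.integral_comp_add_left (a := (0:ℝ)) (b := 1) ρ (t-1)
    rw [show t-1+0 = t-1 by ring, show t-1+(1:ℝ) = t by ring] at this
    rw [this]
  have hpt : ∀ s ∈ Set.uIcc (0:ℝ) 1,
      ρ (t - 1 + s) = ρ (t-1) * Real.exp (-(∫ w in (0:ℝ)..s, hfd ρ (t - 1 + w))) := by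
    intro s hs
    rw [uIcc_of_le (by norm_num : (0:ℝ) ≤ 1)] at hs
    have hratio := rho_ratio h0 h1 hc hd (t-1) (t-1+s) (by linarith) (by linarith [hs.1])
    have hshift2 : ∫ u in (t-1)..(t-1+s), hfd ρ u = ∫ w in (0:ℝ)..s, hfd ρ (t - 1 + w) := by
      have := intervalIntegral.integral_comp_add_left (a := (0:ℝ)) (b := s) (hfd ρ) (t-1)
      rw [show t-1+0 = t-1 by ring] at this
      rw [this]
    rw [hshift2] at hratio
    rw [hratio, Real.exp_neg]
    have he := Real.exp_pos (∫ w in (0:ℝ)..s, hfd ρ (t - 1 + w))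
    field_simp
  have hcongr : ∫ s in (0:ℝ)..1, ρ (t - 1 + s)
      = ρ (t-1) * ∫ s in (0:ℝ)..1, Real.exp (-(∫ w in (0:ℝ)..s, hfd ρ (t - 1 + w))) := by
    rw [← intervalIntegral.integral_const_mul]
    exact intervalIntegral.integral_congr hpt
  have hkey : t * ρ t = ρ (t-1) * ∫ s in (0:ℝ)..1,
      Real.exp (-(∫ w in (0:ℝ)..s, hfd ρ (t - 1 + w))) := by
    rw [hid, hshift, hcongr]
  rw [hfd, one_div_div]
  rw [hkey]
  field_simp

include h0 h1 hc hd in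
lemma mono_step (T : ℝ) (hT : 2 ≤ T) (hmono : MonotoneOn (hfd ρ) (Set.Icc 1 T)) :
    ∃ δ > 0, MonotoneOn (hfd ρ) (Set.Icc 1 (T + δ)) := by
  obtain ⟨xM, hxM, hmax⟩ := isCompact_Icc.exists_isMaxOn (s := Set.Icc (1:ℝ) (T+1))
      ⟨1, by constructor <;> linarith⟩
      ((hfd_cont h0 h1 hc hd).mono (fun x hx => hx.1))
  set M := hfd ρ xM with hM
  have hMpos : 0 < M :=
    lt_of_lt_of_le (hfd_pos h0 h1 hc hd 1 le_rfl) (hmax ⟨le_rfl, by linarith⟩)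
  set δ := min (1/2 : ℝ) (1/(4*M)) with hδdef
  have hδpos : 0 < δ := lt_min (by norm_num) (by positivity)
  have hδhalf : δ ≤ 1/2 := min_le_left _ _
  have hδM : δ * M ≤ 1/4 := by
    have h4 : δ ≤ 1/(4*M) := min_le_right _ _
    calc δ * M ≤ (1/(4*M)) * M := mul_le_mul_of_nonneg_right h4 hMpos.le
      _ = 1/4 := by field_simp [mul_comm]
  refine ⟨δ, hδpos, ?_⟩
  have hbound : ∀ x ∈ Set.Icc (1:ℝ) (T+δ), hfd ρ x ≤ M := fun x hx =>
    hmax ⟨hx.1, by linarith [hx.2]⟩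
  set K : Set (ℝ × ℝ) := (Set.Icc (1:ℝ) (T+δ) ×ˢ Set.Icc (1:ℝ) (T+δ)) ∩ {p | p.1 ≤ p.2}
    with hK
  have hKcomp : IsCompact K := (isCompact_Icc.prod isCompact_Icc).inter_right
    (isClosed_le continuous_fst continuous_snd)
  have h1Tδ : (1:ℝ) ≤ T + δ := by linarith
  have hKne : K.Nonempty := ⟨(1,1), ⟨⟨⟨le_rfl, h1Tδ⟩, ⟨le_rfl, h1Tδ⟩⟩, by simp⟩⟩
  have hgcont : ContinuousOn (fun p : ℝ × ℝ => hfd ρ p.1 - hfd ρ p.2) K := by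
    apply ContinuousOn.sub
    · exact (hfd_cont h0 h1 hc hd).comp continuous_fst.continuousOn
        (fun p hp => hp.1.1.1)
    · exact (hfd_cont h0 h1 hc hd).comp continuous_snd.continuousOn
        (fun p hp => hp.1.2.1)
  obtain ⟨p, hpK, hpmax⟩ := hKcomp.exists_isMaxOn hKne hgcont
  set ε := hfd ρ p.1 - hfd ρ p.2 with hεdef
  have hεmax : ∀ q ∈ K, hfd ρ q.1 - hfd ρ q.2 ≤ ε := hpmax
  rcases le_or_gt ε 0 with hεle | hεpos
  · intro x hx y hy hxy
    have h9 : hfd ρ x - hfd ρ y ≤ ε := hεmax (x, y) ⟨⟨hx, hy⟩, hxy⟩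
    linarith
  · exfalso
    obtain ⟨⟨hp1, hp2⟩, hp12⟩ := hpK
    have hp12' : p.1 ≤ p.2 := hp12
    have hbT : T < p.2 := by
      by_contra hble
      push_neg at hble
      have := hmono ⟨hp1.1, le_trans hp12' hble⟩ ⟨hp2.1, hble⟩ hp12'
      rw [hεdef] at hεpos
      linarith
    set b := p.2 with hbdef
    set a' := max p.1 T with ha'def
    have ha'b : a' ≤ b := max_le hp12' hbT.le
    have hTa' : T ≤ a' := le_max_right _ _
    have ha'2 : 2 ≤ a' := le_trans hT hTa'
    have hb2 : 2 ≤ b := le_trans hT hbT.le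
    have ha'ub : a' ≤ T + δ := max_le (le_trans hp12' hp2.2) (by linarith)
    have hεa' : ε ≤ hfd ρ a' - hfd ρ b := by
      have hfa : hfd ρ p.1 ≤ hfd ρ a' := by
        rcases le_total p.1 T with haT | haT
        · have h5 : hfd ρ p.1 ≤ hfd ρ T := hmono ⟨hp1.1, haT⟩ ⟨by linarith, le_rfl⟩ haT
          have he : a' = T := by rw [ha'def, max_eq_right haT]
          rw [he]; exact h5
        · have he : a' = p.1 := by rw [ha'def, max_eq_left haT]
          rw [he]
      rw [hεdef]; linarith
    -- key comparison
    set w0 := T + 1 - b with hw0def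
    have hw0ge : 1 - δ ≤ w0 := by rw [hw0def]; linarith [hp2.2]
    have hw0le : w0 ≤ 1 := by rw [hw0def]; linarith
    have hw0pos : 0 ≤ w0 := by linarith
    have hptwise_le : ∀ w, 0 ≤ w → w ≤ w0 →
        hfd ρ (a' - 1 + w) ≤ hfd ρ (b - 1 + w) := by
      intro w hw0' hww0
      apply hmono
      · constructor
        · linarith
        · linarith
      · constructor
        · linarith
        · rw [hw0def] at hww0; linarith
      · linarith
    have hptwise_eps : ∀ w, 0 ≤ w → b - 1 + w ≤ T + δ →
        hfd ρ (a' - 1 + w) - hfd ρ (b - 1 + w) ≤ ε := by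
      intro w hw hub
      have m1 : (1:ℝ) ≤ a' - 1 + w := by linarith
      have m2 : a' - 1 + w ≤ T + δ := by linarith
      have m3 : (1:ℝ) ≤ b - 1 + w := by linarith
      have m4 : a' - 1 + w ≤ b - 1 + w := by linarith
      exact hεmax (a' - 1 + w, b - 1 + w) ⟨⟨⟨m1, m2⟩, ⟨m3, hub⟩⟩, m4⟩
    have hkeycmp : ∀ s, 0 ≤ s → s ≤ 1 →
        (∫ w in (0:ℝ)..s, hfd ρ (a' - 1 + w))
          ≤ (∫ w in (0:ℝ)..s, hfd ρ (b - 1 + w)) + ε * δ := by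
      intro s hs0 hs1
      have hIa : IntervalIntegrable (fun w => hfd ρ (a' - 1 + w)) volume 0 s :=
        aff_intble h0 h1 hc hd (by linarith) le_rfl hs0
      have hIb : IntervalIntegrable (fun w => hfd ρ (b - 1 + w)) volume 0 s :=
        aff_intble h0 h1 hc hd (by linarith) le_rfl hs0
      rcases le_or_gt s w0 with hsw0 | hsw0
      · have hcmp : (∫ w in (0:ℝ)..s, hfd ρ (a' - 1 + w))
            ≤ ∫ w in (0:ℝ)..s, hfd ρ (b - 1 + w) := by
          apply intervalIntegral.integral_mono_on hs0 hIa hIb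
          intro w hw
          exact hptwise_le w hw.1 (le_trans hw.2 hsw0)
        nlinarith [hcmp, hεpos, hδpos]
      · have hsplita : (∫ w in (0:ℝ)..w0, hfd ρ (a' - 1 + w))
            + ∫ w in w0..s, hfd ρ (a' - 1 + w) = ∫ w in (0:ℝ)..s, hfd ρ (a' - 1 + w) :=
          intervalIntegral.integral_add_adjacent_intervals
            (aff_intble h0 h1 hc hd (by linarith) le_rfl hw0pos)
            (aff_intble h0 h1 hc hd (by linarith) hw0pos hsw0.le)
        have hsplitb : (∫ w in (0:ℝ)..w0, hfd ρ (b - 1 + w))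
            + ∫ w in w0..s, hfd ρ (b - 1 + w) = ∫ w in (0:ℝ)..s, hfd ρ (b - 1 + w) :=
          intervalIntegral.integral_add_adjacent_intervals
            (aff_intble h0 h1 hc hd (by linarith) le_rfl hw0pos)
            (aff_intble h0 h1 hc hd (by linarith) hw0pos hsw0.le)
        have hcmp1 : (∫ w in (0:ℝ)..w0, hfd ρ (a' - 1 + w))
            ≤ ∫ w in (0:ℝ)..w0, hfd ρ (b - 1 + w) := by
          apply intervalIntegral.integral_mono_on hw0pos
            (aff_intble h0 h1 hc hd (by linarith) le_rfl hw0pos)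
            (aff_intble h0 h1 hc hd (by linarith) le_rfl hw0pos)
          intro w hw
          exact hptwise_le w hw.1 hw.2
        have hcmp2 : (∫ w in w0..s, hfd ρ (a' - 1 + w))
            ≤ ∫ w in w0..s, (hfd ρ (b - 1 + w) + ε) := by
          apply intervalIntegral.integral_mono_on hsw0.le
            (aff_intble h0 h1 hc hd (by linarith) hw0pos hsw0.le)
            ((aff_intble h0 h1 hc hd (by linarith) hw0pos hsw0.le).add
              intervalIntegrable_const)
          intro w hw
          have hble : b - 1 + w ≤ T + δ := by
            have := hw.2
            linarith [hp2.2, hs1]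
          linarith [hptwise_eps w (le_trans hw0pos hw.1) hble]
        have hcmp2' : (∫ w in w0..s, (hfd ρ (b - 1 + w) + ε))
            = (∫ w in w0..s, hfd ρ (b - 1 + w)) + ε * (s - w0) := by
          rw [intervalIntegral.integral_add
            (aff_intble h0 h1 hc hd (by linarith) hw0pos hsw0.le) intervalIntegrable_const]
          rw [intervalIntegral.integral_const, smul_eq_mul, mul_comm]
        have hfin : ε * (s - w0) ≤ ε * δ := by
          apply mul_le_mul_of_nonneg_left _ hεpos.le
          linarith
        linarith [hsplita, hsplitb, hcmp1, hcmp2, hcmp2', hfin]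
    -- integrate the exponential comparison
    have hexp_cmp : ∀ s ∈ Set.Icc (0:ℝ) 1,
        Real.exp (-(ε*δ)) * Real.exp (-(∫ w in (0:ℝ)..s, hfd ρ (b - 1 + w)))
          ≤ Real.exp (-(∫ w in (0:ℝ)..s, hfd ρ (a' - 1 + w))) := by
      intro s hs
      rw [← Real.exp_add]
      apply Real.exp_le_exp.2
      linarith [hkeycmp s hs.1 hs.2]
    have hprim : ∀ c : ℝ, 1 ≤ c → ContinuousOn
        (fun s => Real.exp (-(∫ w in (0:ℝ)..s, hfd ρ (c + w)))) (Set.uIcc 0 1) := by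
      intro c hc1
      apply Real.continuous_exp.comp_continuousOn
      apply ContinuousOn.neg
      apply intervalIntegral.continuousOn_primitive_interval'
        (aff_intble h0 h1 hc hd hc1 le_rfl zero_le_one) left_mem_uIcc
    have hIexp : ∀ c : ℝ, 1 ≤ c → IntervalIntegrable
        (fun s => Real.exp (-(∫ w in (0:ℝ)..s, hfd ρ (c + w)))) volume 0 1 :=
      fun c hc1 => (hprim c hc1).intervalIntegrable
    have hint_cmp : Real.exp (-(ε*δ)) * (∫ s in (0:ℝ)..1,
          Real.exp (-(∫ w in (0:ℝ)..s, hfd ρ (b - 1 + w))))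
        ≤ ∫ s in (0:ℝ)..1, Real.exp (-(∫ w in (0:ℝ)..s, hfd ρ (a' - 1 + w))) := by
      rw [← intervalIntegral.integral_const_mul]
      apply intervalIntegral.integral_mono_on zero_le_one
        ((hIexp (b-1) (by linarith)).const_mul _)
        (hIexp (a'-1) (by linarith))
      exact hexp_cmp
    rw [← inv_hfd h0 h1 hc hd a' ha'2, ← inv_hfd h0 h1 hc hd b hb2] at hint_cmp
    -- from exp(-εδ) / hfd b ≤ 1 / hfd a' conclude hfd a' ≤ exp(εδ) * hfd b
    have ha'pos := hfd_pos h0 h1 hc hd a' (by linarith)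
    have hbpos := hfd_pos h0 h1 hc hd b (by linarith)
    have hfinal : hfd ρ a' ≤ Real.exp (ε*δ) * hfd ρ b := by
      have h6 : Real.exp (-(ε*δ)) * hfd ρ a' ≤ hfd ρ b := by
        rw [mul_one_div] at hint_cmp
        rw [div_le_div_iff₀ hbpos ha'pos] at hint_cmp
        nlinarith [hint_cmp]
      have h7 := mul_le_mul_of_nonneg_left h6 (Real.exp_pos (ε*δ)).le
      rw [← mul_assoc, ← Real.exp_add] at h7
      simp at h7
      linarith [h7]
    -- contradiction
    have hεM : ε ≤ M := by
      have := hbound p.1 hp1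
      have := hfd_pos h0 h1 hc hd p.2 (by linarith [hp2.1])
      rw [hεdef]; linarith
    have hfb_M : hfd ρ b ≤ M := hbound b hp2
    clear_value M δ ε b a' w0
    have hεδ14 : ε * δ ≤ 1/4 := by linarith [mul_le_mul_of_nonneg_right hεM hδpos.le]
    have hexpm1 := expm1_le (mul_nonneg hεpos.le hδpos.le) hεδ14
    have e1 : (Real.exp (ε*δ) - 1) * hfd ρ b ≤ (2*(ε*δ)) * hfd ρ b :=
      mul_le_mul_of_nonneg_right (by linarith) hbpos.le
    have e2 : (2*(ε*δ)) * hfd ρ b ≤ (2*(ε*δ)) * M :=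
      mul_le_mul_of_nonneg_left hfb_M (mul_nonneg (by norm_num) (mul_nonneg hεpos.le hδpos.le))
    have hfin2 : ε ≤ 2*(ε*δ)*M := by linarith [hεa', hfinal, e1, e2]
    linarith [mul_le_mul_of_nonneg_left hδM (by linarith : (0:ℝ) ≤ 2*ε)]

include h0 h1 hc hd in
lemma hfd_mono : MonotoneOn (hfd ρ) (Set.Ici 1) := by
  have main : ∀ T, 2 ≤ T → MonotoneOn (hfd ρ) (Set.Icc 1 T) := by
    by_contra hbad
    push_neg at hbad
    set Bad := {T : ℝ | 2 ≤ T ∧ ¬ MonotoneOn (hfd ρ) (Set.Icc 1 T)} with hBad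
    obtain ⟨T₀, hT₀2, hT₀⟩ := hbad
    have hBadne : Bad.Nonempty := ⟨T₀, hT₀2, hT₀⟩
    have hBadbdd : BddBelow Bad := ⟨2, fun x hx => hx.1⟩
    set Ts := sInf Bad with hTs
    have hTs2 : 2 ≤ Ts := le_csInf hBadne (fun x hx => hx.1)
    have hPlt : ∀ T, 2 ≤ T → T < Ts → MonotoneOn (hfd ρ) (Set.Icc 1 T) := by
      intro T h2T hTlt
      by_contra hP
      have : T ∈ Bad := ⟨h2T, hP⟩
      linarith [csInf_le hBadbdd this]
    have hPTs : MonotoneOn (hfd ρ) (Set.Icc 1 Ts) := by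
      rcases eq_or_lt_of_le hTs2 with heq | hgt
      · rw [← heq]
        exact base_mono h0 h1 hc hd
      · intro x hx y hy hxy
        rcases eq_or_lt_of_le hxy with rfl | hxylt
        · exact le_rfl
        rcases eq_or_lt_of_le hy.2 with hyTs | hyTs
        · -- y = Ts : continuity argument
          have hm : max x 2 < Ts := max_lt (by rw [hyTs] at hxylt; exact hxylt) hgt
          have hfilter : 𝓝[Set.Iio Ts] Ts ≤ 𝓝[Set.Ici 1] Ts :=
            nhdsWithin_le_iff.2 (mem_nhdsWithin_of_mem_nhds (Ici_mem_nhds (by linarith)))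
          have htends : Filter.Tendsto (hfd ρ) (𝓝[Set.Iio Ts] Ts) (𝓝 (hfd ρ Ts)) :=
            ((hfd_cont h0 h1 hc hd).continuousWithinAt (mem_Ici.2 (by linarith))).mono_left
              hfilter
          rw [hyTs]
          apply ge_of_tendsto htends
          have hev : Set.Ioo (max x 2) Ts ∈ 𝓝[Set.Iio Ts] Ts := by
            apply mem_nhdsWithin.2
            exact ⟨Set.Ioi (max x 2), isOpen_Ioi, hm, by
              intro z hz
              exact ⟨hz.1, hz.2⟩⟩
          apply Filter.eventually_of_mem hev
          intro z hz
          have hz2 : 2 < z := lt_of_le_of_lt (le_max_right x 2) hz.1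
          have hxz : x ≤ z := le_trans (le_max_left x 2) hz.1.le
          exact hPlt (max 2 z) (le_max_left _ _) (by
              apply max_lt hgt hz.2)
            ⟨hx.1, le_trans hxz (le_max_right 2 z)⟩
            ⟨by linarith [hz2], le_max_right 2 z⟩ hxz
        · -- y < Ts
          have hm2 : max 2 y < Ts := max_lt hgt hyTs
          exact hPlt (max 2 y) (le_max_left _ _) hm2
            ⟨hx.1, le_trans hxy (le_max_right 2 y)⟩
            ⟨hy.1, le_max_right 2 y⟩ hxy
    obtain ⟨δ, hδpos, hPext⟩ := mono_step h0 h1 hc hd Ts hTs2 hPTs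
    have : Ts + δ ≤ Ts := by
      apply le_csInf hBadne
      intro T hT
      by_contra hTlt
      push_neg at hTlt
      exact hT.2 (hPext.mono (Set.Icc_subset_Icc le_rfl hTlt.le))
    linarith
  intro x hx y hy hxy
  have h2y : 2 ≤ max 2 y := le_max_left _ _
  exact main (max 2 y) h2y ⟨hx, le_trans hxy (le_max_right 2 y)⟩
    ⟨hy, le_max_right 2 y⟩ hxy

end mono

section bridges

lemma exp_sub_one_le {x : ℝ} (hx : 0 ≤ x) : Real.exp x - 1 ≤ x * Real.exp x := by
  have h2 := Real.add_one_le_exp (-x)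
  have h1 : Real.exp x * (1 - x) ≤ 1 := by
    calc Real.exp x * (1 - x) ≤ Real.exp x * Real.exp (-x) := by
          apply mul_le_mul_of_nonneg_left _ (Real.exp_pos x).le
          linarith
      _ = 1 := by rw [← Real.exp_add]; simp
  nlinarith [Real.exp_pos x]

lemma abs_exp_sub_one (x : ℝ) : |Real.exp x - 1| ≤ |x| * Real.exp |x| := by
  rcases le_or_gt 0 x with hx | hx
  · rw [abs_of_nonneg hx, abs_of_nonneg (by linarith [Real.add_one_le_exp x] : (0:ℝ) ≤ Real.exp x - 1)]
    exact exp_sub_one_le hx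
  · rw [abs_of_neg hx]
    have hlt : Real.exp x < 1 := by
      rw [← Real.exp_zero]; exact Real.exp_lt_exp.2 hx
    rw [abs_of_nonpos (by linarith)]
    have h1 : 1 - Real.exp x ≤ -x := by linarith [Real.add_one_le_exp x]
    have h2 : (1:ℝ) ≤ Real.exp (-x) := by
      rw [← Real.exp_zero]; apply Real.exp_le_exp.2; linarith
    nlinarith

lemma xi_bound {t x T : ℝ} (hx : 0 ≤ x) (hex : Real.exp x = 1 + t*x)
    (ht : 1 ≤ t) (htT : t ≤ T) : x ≤ 4*T + 2 := by
  have h5 : (1 + x/2)^2 ≤ Real.exp x := by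
    have h7 := Real.add_one_le_exp (x/2)
    rw [← exp_half_sq x]
    nlinarith [h7]
  nlinarith [h5, hex, htT, hx, mul_nonneg hx hx]

variable {ρ : ℝ → ℝ}
  (h0 : ∀ t : ℝ, t < 0 → ρ t = 0)
  (h1 : ∀ t : ℝ, 0 ≤ t → t ≤ 1 → ρ t = 1)
  (hc : ContinuousOn ρ (Set.Ici 0))
  (hd : ∀ t : ℝ, 1 < t → HasDerivAt ρ (-ρ (t - 1) / t) t)

include h0 h1 hc hd in
lemma hfd_ge_xif (u : ℝ) (hu : 2 < u) : xif u ≤ hfd ρ u := by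
  have hs := (sandwich_aux h0 h1 hc hd (hfd_mono h0 h1 hc hd) u hu).2
  by_contra hgt
  push_neg at hgt
  have := psi_strictMonoOn (mem_Ioi.2 (hfd_pos h0 h1 hc hd u (by linarith)))
    (mem_Ioi.2 (xif_pos (by linarith))) hgt
  rw [psi_xif (by linarith : (1:ℝ) < u)] at this
  linarith

include h0 h1 hc hd in
lemma hfd_le_xif (u : ℝ) (hu : 2 < u) : hfd ρ u ≤ xif (u+1) := by
  have hs := (sandwich_aux h0 h1 hc hd (hfd_mono h0 h1 hc hd) (u+1) (by linarith)).1
  rw [show u + (1:ℝ) - 1 = u by ring] at hs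
  by_contra hgt
  push_neg at hgt
  have := psi_strictMonoOn (mem_Ioi.2 (xif_pos (by linarith : (1:ℝ) < u+1)))
    (mem_Ioi.2 (hfd_pos h0 h1 hc hd u (by linarith))) hgt
  rw [psi_xif (by linarith : (1:ℝ) < u+1)] at this
  linarith

end bridges


set_option maxHeartbeats 4000000 in
/-- Lemma (Xuan): `ρ(t - v)/ρ(t) = e^{v ξ(t)} (1 + O(v/t))` uniformly for `t ≥ 1` and
`0 < v ≤ V`, where `ρ` is the Dickman function (extended by `ρ = 0` on negatives) and
`ξ(t)` is the nonnegative solution of `e^ξ = 1 + tξ` (positive for `t > 1`). -/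
theorem stmt2 :
    ∀ V > (0:ℝ), ∃ C > (0:ℝ), ∀ ρ : ℝ → ℝ,
      (∀ t : ℝ, t < 0 → ρ t = 0) →
      (∀ t : ℝ, 0 ≤ t → t ≤ 1 → ρ t = 1) →
      ContinuousOn ρ (Set.Ici 0) →
      (∀ t : ℝ, 1 < t → HasDerivAt ρ (-ρ (t - 1) / t) t) →
      ∀ t : ℝ, 1 ≤ t → ∀ v : ℝ, 0 < v → v ≤ V →
      ∀ ξt : ℝ, 0 ≤ ξt → Real.exp ξt = 1 + t * ξt → (1 < t → 0 < ξt) →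
        |ρ (t - v) / ρ t - Real.exp (v * ξt)| ≤ C * Real.exp (v * ξt) * (v / t) := by
  intro V hV
  set T0 : ℝ := 2*V + 8 with hT0def
  have hT0 : 8 < T0 := by rw [hT0def]; linarith
  set Kc : ℝ := 8*V + 8 with hKdef
  have hKc : 8 ≤ Kc := by rw [hKdef]; linarith
  set ξB : ℝ := 4*T0 + 2 with hξBdef
  have hξBpos : 0 < ξB := by rw [hξBdef]; linarith
  set N : ℕ := ⌈2*T0⌉₊ with hNdef
  set ρlow : ℝ := ((2*T0)⁻¹)^N with hρlowdef
  have hρlowpos : 0 < ρlow := by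
    rw [hρlowdef]; positivity
  set Csmall : ℝ := T0 * (1/ρlow + ξB * Real.exp (V * ξB)) with hCsdef
  have hCspos : 0 < Csmall := by
    rw [hCsdef]; positivity
  set Clarge : ℝ := Kc * Real.exp (Kc * V) with hCldef
  have hClpos : 0 < Clarge := by
    rw [hCldef]; positivity
  refine ⟨1 + Csmall + Clarge, by linarith, ?_⟩
  intro ρ h0 h1 hc hd t ht v hv hvV ξt hξ0 hξeq hξpos
  clear_value T0 Kc ξB N ρlow Csmall Clarge
  have htpos : (0:ℝ) < t := by linarith
  have hEpos : 0 < Real.exp (v * ξt) := Real.exp_pos _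
  have hE1 : 1 ≤ Real.exp (v * ξt) := by
    rw [← Real.exp_zero]; apply Real.exp_le_exp.2; positivity
  have hvt : 0 < v / t := div_pos hv htpos
  by_cases htT0 : t ≤ T0
  · -- small t
    rcases lt_or_ge t v with htv | hvt'
    · -- v > t
      rw [h0 (t - v) (by linarith), zero_div, zero_sub, abs_neg, abs_of_pos hEpos]
      have h1vt : 1 ≤ v / t := (one_le_div htpos).2 htv.le
      have hEvt : 0 < Real.exp (v*ξt) * (v/t) := mul_pos hEpos hvt
      have e3 : Real.exp (v*ξt) * 1 ≤ Real.exp (v*ξt) * (v/t) :=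
        mul_le_mul_of_nonneg_left h1vt hEpos.le
      have e4 : (1:ℝ) * (Real.exp (v*ξt) * (v/t))
          ≤ (1+Csmall+Clarge) * (Real.exp (v*ξt)*(v/t)) :=
        mul_le_mul_of_nonneg_right (by linarith) hEvt.le
      nlinarith [e3, e4]
    · -- v ≤ t
      have htv0 : 0 ≤ t - v := by linarith
      have hρt := rho_pos h0 h1 hc hd t (by linarith)
      have hρtv := rho_pos h0 h1 hc hd (t-v) htv0
      have hρtlow : ρlow ≤ ρ t := by
        rw [hρlowdef]
        apply rho_low h0 h1 hc hd T0 (by linarith) N t (by linarith) htT0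
        have hN : (2*T0 : ℝ) ≤ N := by rw [hNdef]; exact_mod_cast Nat.le_ceil _
        linarith
      have hlip : ρ (t-v) - ρ t ≤ v := by
        have := rho_lip h0 h1 hc hd (t-v) t htv0 (by linarith)
        linarith
      have hanti : ρ t ≤ ρ (t-v) :=
        rho_anti h0 h1 hc hd (mem_Ici.2 htv0) (mem_Ici.2 (by linarith)) (by linarith)
      have hRub : ρ (t-v)/ρ t - 1 ≤ v / ρlow := by
        have he : ρ (t-v)/ρ t - 1 = (ρ (t-v) - ρ t)/ρ t := by field_simp
        rw [he]
        calc (ρ (t-v) - ρ t)/ρ t ≤ v / ρ t := by gcongr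
          _ ≤ v / ρlow := by gcongr
      have hRlb : 0 ≤ ρ (t-v)/ρ t - 1 := by
        have : (1:ℝ) ≤ ρ (t-v)/ρ t := (one_le_div hρt).2 hanti
        linarith
      have hξB' : ξt ≤ ξB := by
        rw [hξBdef]
        exact xi_bound hξ0 hξeq ht htT0
      have hEub : Real.exp (v*ξt) - 1 ≤ v * (ξB * Real.exp (V * ξB)) := by
        have h2 := exp_sub_one_le (show (0:ℝ) ≤ v*ξt by positivity)
        have h3 : v * ξt ≤ V * ξB := by nlinarith
        have h4 : Real.exp (v*ξt) ≤ Real.exp (V*ξB) := Real.exp_le_exp.2 h3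
        have h5 : v*ξt * Real.exp (v*ξt) ≤ v * (ξB * Real.exp (V*ξB)) := by
          have : v * ξt * Real.exp (v*ξt) ≤ v * ξB * Real.exp (V*ξB) := by
            apply mul_le_mul (by nlinarith) h4 (Real.exp_pos _).le (by positivity)
          linarith [this]
        linarith
      have hElb : 0 ≤ Real.exp (v*ξt) - 1 := by linarith
      have habs : |ρ (t-v)/ρ t - Real.exp (v*ξt)| ≤ v * (1/ρlow + ξB * Real.exp (V * ξB)) := by
        rw [abs_le]
        constructor
        · have : v / ρlow = v * (1/ρlow) := by ring
          nlinarith [hRlb, hEub, hρlowpos, hv]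
        · have hvρ : v / ρlow = v * (1/ρlow) := by ring
          nlinarith [hRub, hElb, hv, hξBpos, Real.exp_pos (V*ξB)]
      calc |ρ (t-v)/ρ t - Real.exp (v*ξt)| ≤ v * (1/ρlow + ξB * Real.exp (V * ξB)) := habs
        _ = (T0 * (1/ρlow + ξB * Real.exp (V * ξB))) * (v/T0) := by
            have hT0ne : T0 ≠ 0 := by linarith
            field_simp
            try ring
        _ ≤ (1 + Csmall + Clarge) * Real.exp (v * ξt) * (v / t) := by
            rw [← hCsdef]
            have hfrac : v/T0 ≤ v/t := by
              apply div_le_div_of_nonneg_left hv.le htpos htT0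
            have h6 : Csmall * (v/T0) ≤ Csmall * (v/t) :=
              mul_le_mul_of_nonneg_left hfrac hCspos.le
            have h7 : Csmall * (v/t) ≤ (1 + Csmall + Clarge) * Real.exp (v * ξt) * (v / t) := by
              have : Csmall ≤ (1 + Csmall + Clarge) * Real.exp (v * ξt) := by
                nlinarith [hE1, hCspos, hClpos]
              exact mul_le_mul_of_nonneg_right this hvt.le
            linarith
  · -- large t
    push_neg at htT0
    have ht1 : (1:ℝ) < t := by linarith
    have hξeq' : ξt = xif t := xi_eq_xif ht1 (hξpos ht1) hξeq
    have hm := hfd_mono h0 h1 hc hd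
    have htv3 : 3 ≤ t - v := by linarith
    have hρt := rho_pos h0 h1 hc hd t (by linarith)
    have hρtv := rho_pos h0 h1 hc hd (t-v) (by linarith)
    set ξ := xif t with hξdef
    have hξgt : 3/2 ≤ ξ := by rw [hξdef]; exact xif_ge (by linarith)
    -- integrand bounds on [t-v, t]
    have hub : ∀ u ∈ Set.Icc (t-v) t, hfd ρ u ≤ ξ + 4/t := by
      intro u hu
      have hle := hfd_le_xif h0 h1 hc hd u (by linarith [hu.1])
      have hmono2 : xif (u+1) ≤ xif (t+1) := xif_mono (by linarith [hu.1]) (by linarith [hu.2])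
      have hlip := xif_lip (t1 := t) (t2 := t+1) (by linarith) (by linarith)
      rw [show t + 1 - t = (1:ℝ) by ring] at hlip
      rw [hξdef]
      have : 4*(1:ℝ)/t = 4/t := by ring
      linarith [hle, hmono2, hlip]
    have hlb : ∀ u ∈ Set.Icc (t-v) t, ξ - 8*V/t ≤ hfd ρ u := by
      intro u hu
      have hge := hfd_ge_xif h0 h1 hc hd u (by linarith [hu.1])
      have hmono2 : xif (t-v) ≤ xif u := xif_mono (by linarith) hu.1
      have hlip := xif_lip (t1 := t-v) (t2 := t) htv3 (by linarith)
      rw [show t - (t-v) = v by ring] at hlip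
      have h8 : 4*v/(t-v) ≤ 8*V/t := by
        rw [div_le_div_iff₀ (by linarith) htpos]
        nlinarith [hv.le, hvV, htT0, hV]
      rw [hξdef]
      linarith [hge, hmono2, hlip, h8]
    -- integral bounds
    have hintble : IntervalIntegrable (hfd ρ) volume (t-v) t := by
      apply ContinuousOn.intervalIntegrable
      apply (hfd_cont h0 h1 hc hd).mono
      rw [uIcc_of_le (by linarith : t - v ≤ t)]
      exact fun x hx => le_trans (by linarith) hx.1
    set I := ∫ u in (t-v)..t, hfd ρ u with hIdef
    have hint_ub : I ≤ v * (ξ + 4/t) := by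
      have h9 : I ≤ ∫ u in (t-v)..t, (ξ + 4/t) := by
        rw [hIdef]
        apply intervalIntegral.integral_mono_on (by linarith) hintble
          intervalIntegrable_const hub
      rw [intervalIntegral.integral_const, smul_eq_mul] at h9
      rw [show t - (t-v) = v by ring] at h9
      exact h9
    have hint_lb : v * (ξ - 8*V/t) ≤ I := by
      have h9 : (∫ u in (t-v)..t, (ξ - 8*V/t)) ≤ I := by
        rw [hIdef]
        apply intervalIntegral.integral_mono_on (by linarith)
          intervalIntegrable_const hintble hlb
      rw [intervalIntegral.integral_const, smul_eq_mul] at h9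
      rw [show t - (t-v) = v by ring] at h9
      exact h9
    -- R = exp I
    have hlog := logFTC h0 h1 hc hd (t-v) t (by linarith) (by linarith)
    have hR : ρ (t-v) / ρ t = Real.exp I := by
      rw [← Real.exp_log (div_pos hρtv hρt), Real.log_div hρtv.ne' hρt.ne']
      congr 1
      rw [hIdef]
      linarith [hlog]
    -- θ bounds
    set θ := I - v * ξ with hθdef
    have hθub : θ ≤ Kc * (v/t) := by
      rw [hθdef]
      have : v * (4/t) = 4 * (v/t) := by ring
      have h10 : Kc * (v/t) ≥ 4 * (v/t) := by
        apply mul_le_mul_of_nonneg_right (by linarith) hvt.le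
      nlinarith [hint_ub, hvt]
    have hθlb : -(Kc * (v/t)) ≤ θ := by
      rw [hθdef]
      have h11 : v * (8*V/t) = 8*V * (v/t) := by ring
      have h12 : 8*V * (v/t) ≤ Kc * (v/t) := by
        apply mul_le_mul_of_nonneg_right (by rw [hKdef]; linarith) hvt.le
      nlinarith [hint_lb, hvt]
    have hθabs : |θ| ≤ Kc * (v/t) := abs_le.2 ⟨hθlb, hθub⟩
    have hθKV : |θ| ≤ Kc * V := by
      have : v/t ≤ V := by
        rw [div_le_iff₀ htpos]
        nlinarith [hvV, ht]
      calc |θ| ≤ Kc * (v/t) := hθabs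
        _ ≤ Kc * V := mul_le_mul_of_nonneg_left this (by linarith)
    -- final computation
    have hsplit : Real.exp I = Real.exp (v * ξt) * Real.exp θ := by
      rw [← Real.exp_add, hθdef, hξeq']
      congr 1
      ring
    have hdiff : |ρ (t-v)/ρ t - Real.exp (v*ξt)| = Real.exp (v*ξt) * |Real.exp θ - 1| := by
      rw [hR, hsplit]
      have he2 : Real.exp (v*ξt) * Real.exp θ - Real.exp (v*ξt)
          = Real.exp (v*ξt) * (Real.exp θ - 1) := by ring
      rw [he2, abs_mul, abs_of_pos hEpos]
    rw [hdiff]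
    have habs1 : |Real.exp θ - 1| ≤ |θ| * Real.exp |θ| := abs_exp_sub_one θ
    have habs2 : |θ| * Real.exp |θ| ≤ (Kc * (v/t)) * Real.exp (Kc * V) := by
      apply mul_le_mul hθabs (Real.exp_le_exp.2 hθKV) (Real.exp_pos _).le
      positivity
    calc Real.exp (v*ξt) * |Real.exp θ - 1|
        ≤ Real.exp (v*ξt) * ((Kc * (v/t)) * Real.exp (Kc * V)) := by
          apply mul_le_mul_of_nonneg_left (le_trans habs1 habs2) hEpos.le
      _ = (Kc * Real.exp (Kc * V)) * Real.exp (v*ξt) * (v/t) := by ring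
      _ ≤ (1 + Csmall + Clarge) * Real.exp (v * ξt) * (v / t) := by
          rw [← hCldef]
          apply mul_le_mul_of_nonneg_right _ hvt.le
          apply mul_le_mul_of_nonneg_right _ hEpos.le
          linarith
end

section
/- For every t \ge 0, the Dickman function satisfies \rho(t) \le 1/\Gamma(t + 1), where \Gamma is the Gamma function. -/
/-!
Integrating `t ρ'(t) + ρ(t - 1) = 0` gives `t ρ(t) = ∫_{t-1}^t ρ` for `t ≥ 1`. At a first zero of `ρ`
the right side would be positive, so `ρ > 0`; hence `ρ' ≤ 0`, `ρ` is nonincreasing, and the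
identity yields `t ρ(t) ≤ ρ(t - 1)`. Multiplying by `Γ(t)` and using `t Γ(t) = Γ(t + 1)`, the
quantity `ρ(t) Γ(t + 1)` is bounded by its value at `t - 1`, so it suffices to know it is at most
`1` on `[0, 1]`, where `ρ = 1` and `Γ(t + 1) ≤ 1` by convexity of `Γ` and `Γ(1) = Γ(2) = 1`.
-/

open Set MeasureTheory intervalIntegral

theorem Real.Gamma_le_one_of_mem_Icc {s : ℝ} (hs : s ∈ Icc (1 : ℝ) 2) : Real.Gamma s ≤ 1 := by
  have hconv := Real.convexOn_Gamma.2 (mem_Ioi.2 one_pos) (mem_Ioi.2 two_pos)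
    (sub_nonneg.2 hs.2) (sub_nonneg.2 hs.1) (by ring)
  simp only [Real.Gamma_one, Real.Gamma_two, smul_eq_mul] at hconv
  rw [show (2 - s) * 1 + (s - 1) * 2 = s by ring] at hconv
  linarith

theorem mul_Gamma_add_one_le_one_of_mul_le_sub_one {f : ℝ → ℝ}
    (hbase : ∀ t ∈ Icc (0 : ℝ) 1, f t ≤ 1) (hstep : ∀ t, 1 < t → t * f t ≤ f (t - 1)) :
    ∀ t, 0 ≤ t → f t * Real.Gamma (t + 1) ≤ 1 := by
  suffices h : ∀ n : ℕ, ∀ t : ℝ, 0 ≤ t → t ≤ n + 1 → f t * Real.Gamma (t + 1) ≤ 1 from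
    fun t ht => h ⌊t⌋₊ t ht (Nat.lt_floor_add_one t).le
  intro n
  induction n with
  | zero =>
    intro t ht0 ht1
    have hΓ := Real.Gamma_le_one_of_mem_Icc (s := t + 1) ⟨by linarith, by push_cast at ht1; linarith⟩
    have hΓpos := Real.Gamma_pos_of_pos (s := t + 1) (by linarith)
    nlinarith [hbase t ⟨ht0, by push_cast at ht1; linarith⟩]
  | succ n ih =>
    intro t ht0 htn
    rcases le_or_gt t (n + 1) with h | h
    · exact ih t ht0 h
    have ht1 : 1 < t := by linarith [(Nat.cast_nonneg n : (0 : ℝ) ≤ n)]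
    calc f t * Real.Gamma (t + 1) = t * f t * Real.Gamma t := by
          rw [Real.Gamma_add_one (by linarith)]; ring
      _ ≤ f (t - 1) * Real.Gamma (t - 1 + 1) := by
          rw [sub_add_cancel]
          exact mul_le_mul_of_nonneg_right (hstep t ht1) (Real.Gamma_pos_of_pos (by linarith)).le
      _ ≤ 1 := ih (t - 1) (by linarith) (by push_cast at htn; linarith)

theorem ContinuousOn.exists_first_zero {f : ℝ → ℝ} {a b : ℝ} (hf : ContinuousOn f (Icc a b))
    (ha : 0 < f a) (hb : f b ≤ 0) (hab : a ≤ b) :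
    ∃ c ∈ Ioc a b, f c = 0 ∧ ∀ x ∈ Ico a c, 0 < f x := by
  set S := Icc a b ∩ f ⁻¹' Iic 0
  have hSclosed : IsClosed S := hf.preimage_isClosed_of_isClosed isClosed_Icc isClosed_Iic
  have hSne : S.Nonempty := ⟨b, ⟨hab, le_rfl⟩, hb⟩
  have hSbdd : BddBelow S := ⟨a, fun x hx => hx.1.1⟩
  obtain ⟨⟨hac, hcb⟩, hfc⟩ := hSclosed.csInf_mem hSne hSbdd
  have hpos : ∀ x ∈ Ico a (sInf S), 0 < f x := fun x hx => by
    by_contra! hfx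
    exact (csInf_le hSbdd ⟨⟨hx.1, hx.2.le.trans hcb⟩, hfx⟩).not_gt hx.2
  have hac' : a < sInf S := hac.lt_of_ne fun h => (h ▸ hfc : f a ≤ 0).not_gt ha
  refine ⟨sInf S, ⟨hac', hcb⟩, le_antisymm hfc ?_, hpos⟩
  obtain ⟨z, hz, hfz⟩ := intermediate_value_Icc' hac (hf.mono (Icc_subset_Icc_right hcb))
    ⟨hfc, ha.le⟩
  have : sInf S ≤ z := csInf_le hSbdd ⟨⟨hz.1, hz.2.trans hcb⟩, hfz.le⟩
  rw [← le_antisymm hz.2 this, hfz]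

theorem Continuous.hasDerivAt_integral_sub {f : ℝ → ℝ} (hf : Continuous f) (c x : ℝ) :
    HasDerivAt (fun y => ∫ u in (y - c)..y, f u) (f x - f (x - c)) x := by
  have hprim (y : ℝ) : HasDerivAt (fun z => ∫ u in (0 : ℝ)..z, f u) (f y) y :=
    (hf.integral_hasStrictDerivAt 0 y).hasDerivAt
  have hwindow : (fun y => ∫ u in (y - c)..y, f u) =
      fun y => (∫ u in (0 : ℝ)..y, f u) - ∫ u in (0 : ℝ)..(y - c), f u :=
    funext fun y => (integral_interval_sub_left (hf.intervalIntegrable _ _)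
      (hf.intervalIntegrable _ _)).symm
  rw [hwindow]
  exact (hprim x).sub ((hprim (x - c)).comp_sub_const x c)

structure IsDickman (ρ : ℝ → ℝ) : Prop where
  eq_one : ∀ t : ℝ, 0 ≤ t → t ≤ 1 → ρ t = 1
  continuousOn : ContinuousOn ρ (Ici 0)
  hasDerivAt : ∀ t : ℝ, 1 < t → HasDerivAt ρ (-ρ (t - 1) / t) t

namespace IsDickman

variable {ρ : ℝ → ℝ}

theorem intervalIntegrable (hρ : IsDickman ρ) {a b : ℝ} (ha : 0 ≤ a) (hb : 0 ≤ b) :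
    IntervalIntegrable ρ volume a b :=
  (hρ.continuousOn.mono fun _ hx => (le_min ha hb).trans hx.1).intervalIntegrable

theorem mul_eq_integral (hρ : IsDickman ρ) {t : ℝ} (ht : 1 ≤ t) :
    t * ρ t = ∫ u in (t - 1)..t, ρ u := by
  set ρ' : ℝ → ℝ := fun x => ρ (max x 0)
  have hρ'cont : Continuous ρ' :=
    hρ.continuousOn.comp_continuous (continuous_id.max continuous_const) fun x => le_max_right x 0
  have hρ' : ∀ x, 0 ≤ x → ρ' x = ρ x := fun x hx => by simp only [ρ', max_eq_left hx]
  have hwindow : ∀ s, 1 ≤ s → ∫ u in (s - 1)..s, ρ' u = ∫ u in (s - 1)..s, ρ u := fun s hs =>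
    integral_congr fun x hx => hρ' x (by rw [uIcc_of_le (by linarith)] at hx; linarith [hx.1])
  set F : ℝ → ℝ := fun x => x * ρ x - ∫ u in (x - 1)..x, ρ' u
  have hF1 : F 1 = 0 := by
    have : ∫ u in (0 : ℝ)..1, ρ' u = 1 := by
      rw [integral_congr (g := fun _ => 1) fun x hx => by
        rw [uIcc_of_le zero_le_one] at hx; exact (hρ' x hx.1).trans (hρ.eq_one x hx.1 hx.2)]
      simp
    simp [F, hρ.eq_one 1 zero_le_one le_rfl, this]
  suffices F t = F 1 by simpa [F, hF1, hwindow t ht, sub_eq_zero] using this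
  rcases ht.eq_or_lt with rfl | ht
  · rfl
  have hFcont : ContinuousOn F (Icc 1 t) :=
    (continuousOn_id.mul (hρ.continuousOn.mono fun x hx => zero_le_one.trans hx.1)).sub
      fun x _ => (hρ'cont.hasDerivAt_integral_sub 1 x).continuousAt.continuousWithinAt
  have hFderiv : ∀ x ∈ Ioo 1 t, HasDerivAt F 0 x := fun x hx => by
    have hx1 : 1 < x := hx.1
    refine (((hasDerivAt_id x).mul (hρ.hasDerivAt x hx1)).sub
      (hρ'cont.hasDerivAt_integral_sub 1 x)).congr_deriv ?_
    rw [hρ' x (by linarith), hρ' (x - 1) (by linarith), id]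
    field_simp
    ring
  obtain ⟨c, -, hc⟩ := exists_hasDerivAt_eq_slope F (fun _ => 0) ht hFcont hFderiv
  rw [eq_div_iff (by linarith)] at hc
  linarith

theorem pos (hρ : IsDickman ρ) {t : ℝ} (ht : 0 ≤ t) : 0 < ρ t := by
  have hρ1 : ρ 1 = 1 := hρ.eq_one 1 zero_le_one le_rfl
  by_contra! hρt
  have ht1 : 1 ≤ t := by
    by_contra! h
    linarith [hρ.eq_one t ht h.le]
  obtain ⟨c, ⟨hc1, -⟩, hρc, hpos⟩ := ContinuousOn.exists_first_zero
    (hρ.continuousOn.mono fun x hx => zero_le_one.trans hx.1) (by rw [hρ1]; exact one_pos) hρt ht1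
  have hpos' : ∀ x ∈ Ico 0 c, 0 < ρ x := fun x hx => by
    rcases le_or_gt 1 x with h | h
    · exact hpos x ⟨h, hx.2⟩
    · rw [hρ.eq_one x hx.1 h.le]; exact one_pos
  have hint : 0 < ∫ u in (c - 1)..c, ρ u :=
    intervalIntegral_pos_of_pos_on (hρ.intervalIntegrable (by linarith) (by linarith))
      (fun x hx => hpos' x ⟨by linarith [hx.1], hx.2⟩) (by linarith)
  linarith [hρ.mul_eq_integral hc1.le, mul_eq_zero_of_right c hρc]

theorem antitoneOn (hρ : IsDickman ρ) : AntitoneOn ρ (Ici 0) := by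
  have hIcc : AntitoneOn ρ (Icc 0 1) := fun x hx y hy _ => by
    rw [hρ.eq_one x hx.1 hx.2, hρ.eq_one y hy.1 hy.2]
  have hIci : AntitoneOn ρ (Ici 1) := by
    refine antitoneOn_of_deriv_nonpos (convex_Ici 1)
      (hρ.continuousOn.mono fun x (hx : 1 ≤ x) => zero_le_one.trans hx) ?_ ?_
    all_goals
      intro x hx
      rw [interior_Ici] at hx
    · exact (hρ.hasDerivAt x hx).differentiableAt.differentiableWithinAt
    · rw [(hρ.hasDerivAt x hx).deriv]
      exact div_nonpos_of_nonpos_of_nonneg (neg_nonpos.2 (hρ.pos (by linarith [mem_Ioi.1 hx])).le)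
        (by linarith [mem_Ioi.1 hx])
  simpa [Icc_union_Ici_eq_Ici zero_le_one] using
    hIcc.union_right hIci (isGreatest_Icc zero_le_one) isLeast_Ici

theorem mul_le_sub_one (hρ : IsDickman ρ) {t : ℝ} (ht : 1 < t) : t * ρ t ≤ ρ (t - 1) := by
  rw [hρ.mul_eq_integral ht.le]
  calc ∫ u in (t - 1)..t, ρ u ≤ ∫ _ in (t - 1)..t, ρ (t - 1) :=
        integral_mono_on (by linarith) (hρ.intervalIntegrable (by linarith) (by linarith))
          intervalIntegrable_const
          fun x hx => hρ.antitoneOn (mem_Ici.2 (by linarith)) (mem_Ici.2 (by linarith [hx.1])) hx.1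
    _ = ρ (t - 1) := by simp

end IsDickman

/-- The Dickman function satisfies `ρ(t) ≤ 1/Γ(t+1)` for all `t ≥ 0`. -/
theorem stmt3 (ρ : ℝ → ℝ)
    (h1 : ∀ t : ℝ, 0 ≤ t → t ≤ 1 → ρ t = 1)
    (hc : ContinuousOn ρ (Set.Ici 0))
    (hd : ∀ t : ℝ, 1 < t → HasDerivAt ρ (-ρ (t - 1) / t) t) :
    ∀ t : ℝ, 0 ≤ t → ρ t ≤ 1 / Real.Gamma (t + 1) := by
  have hρ : IsDickman ρ := ⟨h1, hc, hd⟩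
  intro t ht
  rw [le_div_iff₀ (Real.Gamma_pos_of_pos (by linarith))]
  exact mul_Gamma_add_one_le_one_of_mul_le_sub_one (fun t ht => (hρ.eq_one t ht.1 ht.2).le)
    (fun t ht => hρ.mul_le_sub_one ht) t ht
end

section
/- For every t > 1, the quantity \xi(t) satisfies \log t < \xi(t) \le 2 \log t. -/
/-- For `t > 1`, the unique positive solution `ξ(t)` of `e^ξ = 1 + tξ` satisfies
`log t < ξ(t) ≤ 2 log t`. -/
theorem stmt4 :
    ∀ t : ℝ, 1 < t → ∀ x : ℝ, 0 < x → Real.exp x = 1 + t * x →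
      Real.log t < x ∧ x ≤ 2 * Real.log t := by
  intro t ht x hx hex
  have ht0 : (0:ℝ) < t := by linarith
  have hL : 0 < Real.log t := Real.log_pos ht
  constructor
  · rw [Real.log_lt_iff_lt_exp ht0, hex]
    rcases le_or_gt 1 x with h1 | h1
    · nlinarith
    · have h2 : -x + 1 < Real.exp (-x) := by
        apply Real.add_one_lt_exp
        intro h
        simp at h
        linarith
      rw [Real.exp_neg, hex] at h2
      have hpos : 0 < 1 + t * x := by nlinarith
      have h3 : (-x + 1) * (1 + t * x) < 1 := by
        calc (-x + 1) * (1 + t * x) < (1 + t * x)⁻¹ * (1 + t * x) :=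
              mul_lt_mul_of_pos_right h2 hpos
          _ = 1 := inv_mul_cancel₀ (ne_of_gt hpos)
      nlinarith
  · by_contra hc
    push_neg at hc
    set y := 2 * Real.log t with hy
    have hsinh : Real.log t < Real.sinh (Real.log t) := Real.self_lt_sinh_iff.2 hL
    rw [Real.sinh_eq] at hsinh
    have hexpL : Real.exp (Real.log t) = t := Real.exp_log ht0
    have hexpnL : Real.exp (-Real.log t) = t⁻¹ := by
      rw [Real.exp_neg, hexpL]
    have htinv : t * t⁻¹ = 1 := mul_inv_cancel₀ (ne_of_gt ht0)
    have h1 : t * y < t ^ 2 - 1 := by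
      rw [hexpL, hexpnL] at hsinh
      have := mul_lt_mul_of_pos_left hsinh ht0
      nlinarith
    have hey : Real.exp y = t ^ 2 := by
      rw [hy, two_mul, Real.exp_add, hexpL]; ring
    have h2 : t ^ 2 * (1 + (x - y)) ≤ Real.exp x := by
      have hsplit : Real.exp x = Real.exp y * Real.exp (x - y) := by
        rw [← Real.exp_add]; ring_nf
      rw [hsplit, hey]
      have := Real.add_one_le_exp (x - y)
      nlinarith [Real.exp_pos (x - y)]
    rw [hex] at h2
    nlinarith [mul_pos (mul_pos ht0 (sub_pos.2 ht)) (sub_pos.2 hc)]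
end
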